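/- Let $a = 2^{d-1} - 1$ and $b = 1 - \sqrt{a/(a+1)}$, and consider the offspring distribution $\xi$ with $\mathbb{P}(\xi = r) = ab^{r-1}$ for $r \ge 2$, $\mathbb{P}(\xi = 1) = 0$, and $\mathbb{P}(\xi = 0) = 1 - \sum_{r \ge 2} ab^{r-1}$. Then for any fixed rooted plane tree shape $T$ with $n$ leaves, $m$ internal vertices with child counts $d_1, \ldots, d_m \ge 2$, the probability that a Galton–Watson tree with offspring distribution $\xi$, with the root uniformly labeled by one of $2^d$ sign sequences and each internal vertex independently uniformly labeled by one of $a$ swap sequences, equals $T$ (with given labels) is $2^{-d}\,\mathbb{P}(\xi=0)^n\, b^{n-1}$, which depends only on $d$ and $n$. Consequently, conditioned on having $n$ leaves, this procedure produces a uniformly random swap tree of size $n$. -/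
import Mathlib


/-- Rooted plane trees (leaf = node with no children). -/
inductive PTree : Type
  | node : List PTree → PTree

mutual
  /-- Number of leaves. -/
  def leavesP : PTree → ℕ
    | .node [] => 1
    | .node (t :: ts) => leavesP t + leavesPList ts
  def leavesPList : List PTree → ℕ
    | [] => 0
    | t :: ts => leavesP t + leavesPList ts
end

mutual
  /-- Number of internal vertices (vertices with at least one child). -/
  def internalsP : PTree → ℕ
    | .node [] => 0
    | .node (t :: ts) => 1 + internalsP t + internalsPList ts
  def internalsPList : List PTree → ℕ
    | [] => 0
    | t :: ts => internalsP t + internalsPList ts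
end

mutual
  /-- The Galton–Watson probability of a given tree shape, for the offspring
  distribution `p`: the product over vertices of `p(number of children)`. -/
  def gwProb (p : ℕ → ℝ) : PTree → ℝ
    | .node [] => p 0
    | .node (t :: ts) => p (t :: ts).length * (gwProb p t * gwProbList p ts)
  def gwProbList (p : ℕ → ℝ) : List PTree → ℝ
    | [] => 1
    | t :: ts => gwProb p t * gwProbList p ts
end

mutual
  /-- Every vertex has either no children or at least two children. -/
  def ValidP : PTree → Prop
    | .node ts => (ts = [] ∨ 2 ≤ ts.length) ∧ ValidPList ts
  def ValidPList : List PTree → Prop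
    | [] => True
    | t :: ts => ValidP t ∧ ValidPList ts
end

theorem leavesP_pos : ∀ T : PTree, 1 ≤ leavesP T
  | .node [] => le_refl 1
  | .node (t :: ts) => by
      have h := leavesP_pos t
      simp only [leavesP]
      omega

mutual
theorem gwKey (p : ℕ → ℝ) (a b : ℝ) (hp2 : ∀ r, 2 ≤ r → p r = a * b ^ (r - 1)) :
    ∀ T : PTree, ValidP T →
      gwProb p T * b = p 0 ^ leavesP T * a ^ internalsP T * b ^ leavesP T
  | .node [], _ => by simp [gwProb, leavesP, internalsP]
  | .node (t :: ts), h => by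
      rw [ValidP] at h
      obtain ⟨hlen, hv⟩ := h
      rw [ValidPList] at hv
      have h2 : 2 ≤ (t :: ts).length := by
        rcases hlen with h' | h'
        · exact absurd h' (by simp)
        · exact h'
      have ih1 := gwKey p a b hp2 t hv.1
      have ih2 := gwKeyList p a b hp2 ts hv.2
      have hplen : p (t :: ts).length = a * b ^ ts.length := by
        rw [hp2 _ h2]; simp
      simp only [gwProb, leavesP, internalsP, hplen]
      have : a * b ^ ts.length * (gwProb p t * gwProbList p ts) * b
          = a * (gwProb p t * b) * (gwProbList p ts * b ^ ts.length) := by ring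
      rw [this, ih1, ih2, pow_add, pow_add, pow_add, pow_add]
      ring

theorem gwKeyList (p : ℕ → ℝ) (a b : ℝ) (hp2 : ∀ r, 2 ≤ r → p r = a * b ^ (r - 1)) :
    ∀ ts : List PTree, ValidPList ts →
      gwProbList p ts * b ^ ts.length
        = p 0 ^ leavesPList ts * a ^ internalsPList ts * b ^ leavesPList ts
  | [], _ => by simp [gwProbList, leavesPList, internalsPList]
  | t :: ts, h => by
      rw [ValidPList] at h
      have ih1 := gwKey p a b hp2 t h.1
      have ih2 := gwKeyList p a b hp2 ts h.2
      simp only [gwProbList, leavesPList, internalsPList, List.length_cons]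
      have : gwProb p t * gwProbList p ts * b ^ (ts.length + 1)
          = (gwProb p t * b) * (gwProbList p ts * b ^ ts.length) := by ring
      rw [this, ih1, ih2, pow_add, pow_add, pow_add]
      ring
end

/-- Let `a = 2^{d-1} - 1`, `b = 1 - √(a/(a+1))`, and let `ξ` be the offspring
distribution with `ℙ(ξ = r) = a b^{r-1}` for `r ≥ 2`, `ℙ(ξ = 1) = 0` and
`ℙ(ξ = 0) = 1 - ∑_{r ≥ 2} a b^{r-1}`. For any fixed tree shape `T` with `n` leaves and
`m` internal vertices (each with at least two children), the probability that the
Galton–Watson tree with root label uniform among `2^d` sign sequences and internal labels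
uniform among the `a` swap sequences produces `T` with given labels equals
`2^{-d} ℙ(ξ=0)^n b^{n-1}`, which depends only on `d` and `n`; consequently any two such
labeled trees with `n` leaves are equally likely, so conditioning on `n` leaves yields a
uniform swap tree of size `n`. -/
theorem galton_watson_swap_tree_uniform (d : ℕ) (hd : 2 ≤ d) (a b : ℝ) (p : ℕ → ℝ)
    (ha : a = 2 ^ (d - 1) - 1)
    (hb : b = 1 - Real.sqrt (a / (a + 1)))
    (hp : ∀ r : ℕ, p r =
      if r = 0 then 1 - ∑' r' : ℕ, (if 2 ≤ r' then a * b ^ (r' - 1) else 0)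
      else if r = 1 then 0 else a * b ^ (r - 1))
    (T : PTree) (hT : ValidP T) (n m : ℕ) (hn : leavesP T = n) (hm : internalsP T = m) :
    gwProb p T * ((2 : ℝ) ^ d)⁻¹ * (a ^ m)⁻¹ = ((2 : ℝ) ^ d)⁻¹ * (p 0) ^ n * b ^ (n - 1) ∧
    ∀ (T₂ : PTree) (m₂ : ℕ), ValidP T₂ → leavesP T₂ = n → internalsP T₂ = m₂ →
      gwProb p T * ((2 : ℝ) ^ d)⁻¹ * (a ^ m)⁻¹ =
        gwProb p T₂ * ((2 : ℝ) ^ d)⁻¹ * (a ^ m₂)⁻¹ := by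

  have ha1 : (1 : ℝ) ≤ a := by
    rw [ha]
    have : (2:ℝ) ^ 1 ≤ (2:ℝ) ^ (d - 1) := by
      apply pow_le_pow_right₀ (by norm_num)
      omega
    simpa using by linarith
  have ha0 : (0:ℝ) < a := by linarith
  have hane : a ≠ 0 := ne_of_gt ha0
  have hfrac : a / (a + 1) < 1 := by
    rw [div_lt_one (by linarith)]; linarith
  have hfrac0 : (0:ℝ) ≤ a / (a + 1) := by positivity
  have hb0 : 0 < b := by
    rw [hb]
    have h1 : Real.sqrt (a / (a + 1)) < Real.sqrt 1 :=
      Real.sqrt_lt_sqrt hfrac0 (by linarith)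
    rw [Real.sqrt_one] at h1
    linarith
  have hbne : b ≠ 0 := ne_of_gt hb0
  have hp2 : ∀ r, 2 ≤ r → p r = a * b ^ (r - 1) := by
    intro r hr
    rw [hp r]
    rw [if_neg (by omega), if_neg (by omega)]
  have main : ∀ (T' : PTree) (m' : ℕ), ValidP T' → leavesP T' = n → internalsP T' = m' →
      gwProb p T' * ((2 : ℝ) ^ d)⁻¹ * (a ^ m')⁻¹ = ((2 : ℝ) ^ d)⁻¹ * (p 0) ^ n * b ^ (n - 1) := by
    intro T' m' hT' hn' hm'
    have hkey := gwKey p a b hp2 T' hT'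
    rw [hn', hm'] at hkey
    have hn1 : 1 ≤ n := hn' ▸ leavesP_pos T'
    have hbn : b ^ n = b ^ (n - 1) * b := by
      rw [← pow_succ]
      congr 1
      omega
    rw [hbn] at hkey
    have hgw : gwProb p T' = p 0 ^ n * a ^ m' * b ^ (n - 1) := by
      have := mul_right_cancel₀ hbne (by rw [hkey]; ring : gwProb p T' * b = (p 0 ^ n * a ^ m' * b ^ (n - 1)) * b)
      exact this
    rw [hgw]
    have ham : (a : ℝ) ^ m' ≠ 0 := pow_ne_zero _ hane
    field_simp
  refine ⟨main T m hT hn hm, ?_⟩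
  intro T₂ m₂ hT₂ hn₂ hm₂
  rw [main T m hT hn hm, main T₂ m₂ hT₂ hn₂ hm₂]
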